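/- arXiv:2505.03447 — 5 statements merged into one kernel-verified Lean document; each statement's English description precedes it below -/
import Mathlib

section
/- The Dirichlet series of the squarefree indicator satisfies ∑_{n=1}^∞ μ(n)²/nˢ = ζ(s)/ζ(2s) for every real s > 1. -/
/-!
`μ²` is multiplicative and vanishes on prime powers `p ^ e` with `e ≥ 2`, so its Dirichlet series
has the Euler product `∏_p (1 + p^{-s})`. Multiplying by `ζ(2s) = ∏_p (1 - p^{-2s})⁻¹` and using
`(1 + x) / (1 - x²) = 1 / (1 - x)` factor by factor gives the Euler product of `ζ(s)`.
-/

open ArithmeticFunction Complex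
open scoped ArithmeticFunction.Moebius

lemma one_add_mul_inv_one_sub_sq {K : Type*} [Field K] {x : K} (hx : 1 + x ≠ 0) :
    (1 + x) * (1 - x ^ 2)⁻¹ = (1 - x)⁻¹ := by
  rw [show 1 - x ^ 2 = (1 - x) * (1 + x) by ring, mul_inv, mul_left_comm, mul_inv_cancel₀ hx,
    mul_one]

lemma norm_natCast_cpow_neg_lt_one {p : ℕ} (hp : 1 < p) {s : ℂ} (hs : 0 < s.re) :
    ‖(p : ℂ) ^ (-s)‖ < 1 := by
  rw [norm_natCast_cpow_of_pos (by omega), neg_re]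
  exact Real.rpow_lt_one_of_one_lt_of_neg (by exact_mod_cast hp) (neg_neg_of_pos hs)

section MoebiusSq

variable {s : ℂ}

lemma one_lt_re_two_mul (hs : 1 < s.re) : 1 < (2 * s).re := by
  simp only [mul_re, re_ofNat, im_ofNat, zero_mul, sub_zero]
  linarith

lemma summable_norm_moebius_sq_div_cpow (hs : 1 < s.re) :
    Summable fun n : ℕ ↦ ‖(μ n : ℂ) ^ 2 / (n : ℂ) ^ s‖ := by
  refine (Real.summable_one_div_nat_rpow.mpr hs).of_nonneg_of_le (fun _ ↦ norm_nonneg _)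
    fun n ↦ ?_
  rw [norm_div, norm_natCast_cpow_of_re_ne_zero n (by linarith), norm_pow, norm_intCast]
  gcongr
  exact pow_le_one₀ (abs_nonneg _) (by exact_mod_cast abs_moebius_le_one)

lemma moebius_sq_div_cpow_mul_of_coprime {m n : ℕ} (h : m.Coprime n) :
    (μ (m * n) : ℂ) ^ 2 / ((m * n : ℕ) : ℂ) ^ s
      = (μ m : ℂ) ^ 2 / (m : ℂ) ^ s * ((μ n : ℂ) ^ 2 / (n : ℂ) ^ s) := by
  rw [isMultiplicative_moebius.map_mul_of_coprime h, Nat.cast_mul, natCast_mul_natCast_cpow]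
  push_cast
  ring

lemma tsum_moebius_sq_prime_pow_div_cpow {p : ℕ} (hp : p.Prime) :
    ∑' e : ℕ, (μ (p ^ e) : ℂ) ^ 2 / ((p ^ e : ℕ) : ℂ) ^ s = 1 + (p : ℂ) ^ (-s) := by
  have h_vanish : ∀ e ∉ Finset.range 2, (μ (p ^ e) : ℂ) ^ 2 / ((p ^ e : ℕ) : ℂ) ^ s = 0 := by
    intro e he
    rw [Finset.mem_range, not_lt] at he
    simp [moebius_apply_prime_pow hp (by omega : e ≠ 0), show e ≠ 1 by omega]
  rw [tsum_eq_sum h_vanish]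
  simp [Finset.sum_range_succ, moebius_apply_prime hp, cpow_neg]

theorem hasProd_moebius_sq_eulerProduct (hs : 1 < s.re) :
    HasProd (fun p : Nat.Primes ↦ 1 + (p : ℂ) ^ (-s))
      (∑' n : ℕ, (μ n : ℂ) ^ 2 / (n : ℂ) ^ s) := by
  convert EulerProduct.eulerProduct_hasProd (f := fun n : ℕ ↦ (μ n : ℂ) ^ 2 / (n : ℂ) ^ s)
    (by simp) moebius_sq_div_cpow_mul_of_coprime (summable_norm_moebius_sq_div_cpow hs)
    (by simp [ne_zero_of_one_lt_re hs]) with p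
  exact (tsum_moebius_sq_prime_pow_div_cpow p.prop).symm

theorem tsum_moebius_sq_div_cpow_mul_riemannZeta_two_mul (hs : 1 < s.re) :
    (∑' n : ℕ, (μ n : ℂ) ^ 2 / (n : ℂ) ^ s) * riemannZeta (2 * s) = riemannZeta s := by
  refine ((hasProd_moebius_sq_eulerProduct hs).mul
    (riemannZeta_eulerProduct_hasProd (one_lt_re_two_mul hs))).unique ?_
  convert riemannZeta_eulerProduct_hasProd hs using 2 with p
  have hx : 1 + (p : ℂ) ^ (-s) ≠ 0 := by
    have hlt := norm_natCast_cpow_neg_lt_one p.prop.one_lt (s := s) (by linarith)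
    rw [← norm_neg] at hlt
    simpa only [sub_neg_eq_add] using (isUnit_one_sub_of_norm_lt_one hlt).ne_zero
  rw [show -(2 * s) = (2 : ℕ) * -s by push_cast; ring, cpow_nat_mul,
    one_add_mul_inv_one_sub_sq hx]

end MoebiusSq

theorem tsum_squarefree_eq_zeta_div (s : ℝ) (hs : 1 < s) :
    ∑' n : ℕ, ((ArithmeticFunction.moebius n : ℂ))^2 / (n : ℂ)^(s : ℂ)
      = riemannZeta s / riemannZeta (2*s) := by
  have hs' : 1 < (s : ℂ).re := by rwa [ofReal_re]
  rw [eq_div_iff (riemannZeta_ne_zero_of_one_lt_re (one_lt_re_two_mul hs')),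
    tsum_moebius_sq_div_cpow_mul_riemannZeta_two_mul hs']
end

section
/- Let B ≥ 1 be a real number and let 𝒬_B = { n ∈ ℕ : n = a²b³ for some positive integers a, b with b ≤ B and b squarefree }. Then for any real numbers X, H with 4 ≤ H ≤ X and any positive integer n with n² ≤ X + H, the number of elements f ∈ 𝒬_B with n² ≤ f < (n+1)² and f ≤ X + H is O(B), with an absolute implied constant. -/
/-!
For a fixed `c ≥ 1`, consecutive numbers of the form `a² c` differ by `(2a + 1) c ≥ 2ac + 1`, while
`n² ≤ a² c ≤ (ac)²` gives `ac ≥ n`; so they differ by more than the gap `2n + 1` between `n²` and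
`(n + 1)²`. Hence each squarefree `b ≤ B` contributes at most one `a² b³` in `[n², (n + 1)²)`, and
there are at most `⌊B⌋` of them.
-/

/-- The set of positive integers of the form `a² b³` with `b` squarefree and `b ≤ B`. -/
def QB (B : ℝ) : Set ℕ :=
  {n : ℕ | ∃ a b : ℕ, 0 < a ∧ 0 < b ∧ Squarefree b ∧ (b : ℝ) ≤ B ∧ n = a^2 * b^3}

lemma succ_sq_le_sq_mul_of_lt {n a a' c : ℕ} (hc : 0 < c) (h : n ^ 2 ≤ a ^ 2 * c) (ha : a < a') :
    (n + 1) ^ 2 ≤ a' ^ 2 * c := by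
  have hn : n ≤ a * c := by
    have : n ^ 2 ≤ (a * c) ^ 2 :=
      calc n ^ 2 ≤ a ^ 2 * c := h
        _ ≤ a ^ 2 * c * c := Nat.le_mul_of_pos_right _ hc
        _ = (a * c) ^ 2 := by ring
    exact (Nat.pow_le_pow_iff_left two_ne_zero).mp this
  calc (n + 1) ^ 2 ≤ (a + 1) ^ 2 * c := by nlinarith
    _ ≤ a' ^ 2 * c := Nat.mul_le_mul_right _ (Nat.pow_le_pow_left ha 2)

lemma subsingleton_sq_mul_mem_Ico {n c : ℕ} (hc : 0 < c) :
    {f : ℕ | n ^ 2 ≤ f ∧ f < (n + 1) ^ 2 ∧ ∃ a, f = a ^ 2 * c}.Subsingleton := by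
  rintro _ ⟨hlo, hhi, a, rfl⟩ _ ⟨hlo', hhi', a', rfl⟩
  have hle : a ≤ a' := not_lt.1 fun h => (succ_sq_le_sq_mul_of_lt hc hlo' h).not_gt hhi
  have hge : a' ≤ a := not_lt.1 fun h => (succ_sq_le_sq_mul_of_lt hc hlo h).not_gt hhi'
  rw [le_antisymm hle hge]

lemma ncard_QB_inter_Ico_sq_le_floor (B : ℝ) (n : ℕ) :
    {f : ℕ | n ^ 2 ≤ f ∧ f < (n + 1) ^ 2 ∧ f ∈ QB B}.ncard ≤ ⌊B⌋₊ := by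
  set S := {f : ℕ | n ^ 2 ≤ f ∧ f < (n + 1) ^ 2 ∧ f ∈ QB B}
  have hrepr : ∀ f ∈ S, ∃ a b : ℕ, 0 < a ∧ 0 < b ∧ Squarefree b ∧ (b : ℝ) ≤ B ∧ f = a ^ 2 * b ^ 3 :=
    fun f hf => hf.2.2
  choose! a b _ hb _ hbB hfab using hrepr
  have hmaps : ∀ f ∈ S, b f ∈ Set.Icc 1 ⌊B⌋₊ := fun f hf => ⟨hb f hf, Nat.le_floor (hbB f hf)⟩
  have hinj : Set.InjOn b S := by
    intro f hf g hg hfg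
    refine subsingleton_sq_mul_mem_Ico (n := n) (pow_pos (hb g hg) 3)
      ⟨hf.1, hf.2.1, a f, ?_⟩ ⟨hg.1, hg.2.1, a g, hfab g hg⟩
    rw [← hfg]
    exact hfab f hf
  calc S.ncard ≤ (Set.Icc 1 ⌊B⌋₊).ncard :=
        Set.ncard_le_ncard_of_injOn b hmaps hinj (Set.finite_Icc _ _)
    _ = ⌊B⌋₊ := by simp

theorem count_QB_between_squares :
    ∃ C : ℝ, 0 < C ∧ ∀ B : ℝ, 1 ≤ B → ∀ X H : ℝ, 4 ≤ H → H ≤ X →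
      ∀ n : ℕ, 0 < n → (n : ℝ)^2 ≤ X + H →
      ({f : ℕ | n^2 ≤ f ∧ f < (n+1)^2 ∧ (f : ℝ) ≤ X + H ∧ f ∈ QB B}.ncard : ℝ)
        ≤ C * B := by
  refine ⟨1, one_pos, fun B hB X H _ _ n _ _ => ?_⟩
  have hsub : {f : ℕ | n ^ 2 ≤ f ∧ f < (n + 1) ^ 2 ∧ (f : ℝ) ≤ X + H ∧ f ∈ QB B} ⊆
      {f : ℕ | n ^ 2 ≤ f ∧ f < (n + 1) ^ 2 ∧ f ∈ QB B} :=
    fun f hf => ⟨hf.1, hf.2.1, hf.2.2.2⟩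
  have hfin : {f : ℕ | n ^ 2 ≤ f ∧ f < (n + 1) ^ 2 ∧ f ∈ QB B}.Finite :=
    (Set.finite_lt_nat _).subset fun f hf => hf.2.1
  have hcard := (Set.ncard_le_ncard hsub hfin).trans (ncard_QB_inter_Ico_sq_le_floor B n)
  calc _ ≤ (⌊B⌋₊ : ℝ) := by exact_mod_cast hcard
    _ ≤ 1 * B := by rw [one_mul]; exact Nat.floor_le (by linarith)
end

section
/- Let B ≥ 1 and let 𝒬_B = { n ∈ ℕ : n = a²b³, b ≤ B, b squarefree }. For real numbers X, H ≥ 2, the number of f ∈ 𝒬_B with X < f ≤ X + H is O(H·X^{-1/2}·B + B). -/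
/-!
An element `a² b³` of `QB B` in `(X, X + H]` has `1 ≤ b ≤ B`, and for fixed `b` its `a` lies in
`(√(X / b³), √((X + H) / b³)]`, an interval of length at most `√(X + H) - √X ≤ H / (2√X)`.
So each of the at most `B` values of `b` contributes at most `H / (2√X) + 1` elements.
-/

open Finset

namespace Nat

theorem card_Ioc_floor_floor_le {x y : ℝ} (hxy : x ≤ y) :
    ((Ioc ⌊x⌋₊ ⌊y⌋₊).card : ℝ) ≤ y - x + 1 := by
  rw [Nat.card_Ioc]
  rcases le_or_gt ⌊y⌋₊ ⌊x⌋₊ with h | h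
  · rw [Nat.sub_eq_zero_of_le h, Nat.cast_zero]
    linarith
  · have hy : 0 ≤ y := (Nat.floor_pos.1 (Nat.zero_lt_of_lt h)).trans' zero_le_one
    rw [Nat.cast_sub h.le]
    linarith [Nat.floor_le hy, Nat.lt_floor_add_one x]

end Nat

namespace Real

theorem sqrt_add_sub_sqrt_le {x h : ℝ} (hx : 0 < x) (hh : 0 ≤ h) :
    √(x + h) - √x ≤ h / (2 * √x) := by
  have hsx : 0 < √x := sqrt_pos.2 hx
  have hsq : x + h ≤ (√x + h / (2 * √x)) ^ 2 := by
    have hmul : 2 * √x * (h / (2 * √x)) = h := by field_simp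
    nlinarith [sq_sqrt hx.le, sq_nonneg (h / (2 * √x))]
  linarith [(sqrt_le_left (by positivity)).2 hsq]

theorem sqrt_div_sub_sqrt_div_le {x y c : ℝ} (hxy : x ≤ y) (hc : 1 ≤ c) :
    √(y / c) - √(x / c) ≤ √y - √x := by
  have hc0 : 0 ≤ c := zero_le_one.trans hc
  rw [sqrt_div' y hc0, sqrt_div' x hc0, div_sub_div_same]
  exact div_le_self (sub_nonneg.2 (sqrt_le_sqrt hxy)) (one_le_sqrt.2 hc)

end Real

theorem mem_Ioc_floor_sqrt_div_of_mem_Ioc {x y c : ℝ} {a : ℕ} (hx : 0 ≤ x) (hc : 0 < c)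
    (ha : (a : ℝ) ^ 2 * c ∈ Set.Ioc x y) :
    a ∈ Ioc ⌊√(x / c)⌋₊ ⌊√(y / c)⌋₊ := by
  obtain ⟨hxa, hay⟩ := ha
  refine mem_Ioc.2 ⟨(Nat.floor_lt (Real.sqrt_nonneg _)).2 ?_, Nat.le_floor ?_⟩
  · calc √(x / c) < √((a : ℝ) ^ 2) :=
          Real.sqrt_lt_sqrt (div_nonneg hx hc.le) ((div_lt_iff₀ hc).2 hxa)
      _ = a := Real.sqrt_sq (Nat.cast_nonneg a)
  · exact Real.le_sqrt_of_sq_le ((le_div_iff₀ hc).2 hay)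

theorem card_Ioc_floor_sqrt_div_le {x h c : ℝ} (hx : 0 < x) (hh : 0 ≤ h) (hc : 1 ≤ c) :
    ((Ioc ⌊√(x / c)⌋₊ ⌊√((x + h) / c)⌋₊).card : ℝ) ≤ h / (2 * √x) + 1 := by
  have hxh : x ≤ x + h := le_add_of_nonneg_right hh
  have hmono : √(x / c) ≤ √((x + h) / c) :=
    Real.sqrt_le_sqrt (div_le_div_of_nonneg_right hxh (zero_le_one.trans hc))
  linarith [Nat.card_Ioc_floor_floor_le hmono, Real.sqrt_div_sub_sqrt_div_le hxh hc,
    Real.sqrt_add_sub_sqrt_le hx hh]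

theorem QB_inter_Ioc_subset {B X H : ℝ} (hX : 0 ≤ X) :
    {f : ℕ | X < (f : ℝ) ∧ (f : ℝ) ≤ X + H ∧ f ∈ QB B} ⊆
      ↑((Icc 1 ⌊B⌋₊).biUnion fun b : ℕ =>
        (Ioc ⌊√(X / (b : ℝ) ^ 3)⌋₊ ⌊√((X + H) / (b : ℝ) ^ 3)⌋₊).image fun a => a ^ 2 * b ^ 3) := by
  rintro f ⟨hXf, hfH, a, b, -, hb, -, hbB, rfl⟩
  simp only [coe_biUnion, coe_Icc, coe_image, Set.mem_iUnion, Set.mem_image, mem_coe]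
  refine ⟨b, ⟨hb, Nat.le_floor hbB⟩, a, ?_, rfl⟩
  push_cast at hXf hfH
  exact mem_Ioc_floor_sqrt_div_of_mem_Ioc hX (by positivity) ⟨hXf, hfH⟩

theorem ncard_QB_inter_Ioc_le {B X H : ℝ} (hB : 0 ≤ B) (hX : 0 < X) (hH : 0 ≤ H) :
    ({f : ℕ | X < (f : ℝ) ∧ (f : ℝ) ≤ X + H ∧ f ∈ QB B}.ncard : ℝ) ≤ B * (H / (2 * √X) + 1) := by
  calc ({f : ℕ | X < (f : ℝ) ∧ (f : ℝ) ≤ X + H ∧ f ∈ QB B}.ncard : ℝ)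
      ≤ ∑ b ∈ Icc 1 ⌊B⌋₊, ((Ioc ⌊√(X / (b : ℝ) ^ 3)⌋₊ ⌊√((X + H) / (b : ℝ) ^ 3)⌋₊).card : ℝ) := by
        grw [Set.ncard_le_ncard (QB_inter_Ioc_subset hX.le) (finite_toSet _), Set.ncard_coe_finset]
        exact_mod_cast card_biUnion_le.trans (sum_le_sum fun _ _ => card_image_le)
    _ ≤ ∑ _b ∈ Icc 1 ⌊B⌋₊, (H / (2 * √X) + 1) := by
        refine sum_le_sum fun b hb => card_Ioc_floor_sqrt_div_le hX hH ?_
        exact one_le_pow₀ (Nat.one_le_cast.2 (mem_Icc.1 hb).1)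
    _ = ⌊B⌋₊ * (H / (2 * √X) + 1) := by
        rw [sum_const, Nat.card_Icc, nsmul_eq_mul, Nat.add_sub_cancel]
    _ ≤ B * (H / (2 * √X) + 1) := by
        gcongr
        exact Nat.floor_le hB

theorem count_QB_short_interval :
    ∃ C : ℝ, ∀ B : ℝ, 1 ≤ B → ∀ X H : ℝ, 2 ≤ X → 2 ≤ H →
      ({f : ℕ | X < (f : ℝ) ∧ (f : ℝ) ≤ X + H ∧ f ∈ QB B}.ncard : ℝ)
        ≤ C * (H * X^(-(1:ℝ)/2) * B + B) := by
  refine ⟨1, fun B hB X H hX hH => ?_⟩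
  have hX0 : 0 < X := by linarith
  have hrpow : X ^ (-(1:ℝ)/2) = (√X)⁻¹ := by
    rw [Real.sqrt_eq_rpow, ← Real.rpow_neg hX0.le]
    norm_num
  calc ({f : ℕ | X < (f : ℝ) ∧ (f : ℝ) ≤ X + H ∧ f ∈ QB B}.ncard : ℝ)
      ≤ B * (H / (2 * √X) + 1) := ncard_QB_inter_Ioc_le (by linarith) hX0 (by linarith)
    _ ≤ B * (H / √X + 1) := by gcongr; linarith [Real.sqrt_pos.2 hX0]
    _ = 1 * (H * X ^ (-(1:ℝ)/2) * B + B) := by rw [hrpow]; ring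
end

section
/- For any real X, H with 4 ≤ H ≤ X and any B ≥ 1: ∑_{b ≤ B} μ(b)² · #{a ∈ ℕ : a² ≤ X/b³} = X^{1/2}·(ζ(3/2)/ζ(3)) + O(X^{1/2}·B^{-1/2} + B). -/
open Finset



noncomputable def fsf : ℕ → ℝ := fun n => (if Squarefree n then (1:ℝ) else 0) / (n:ℝ)^((3:ℝ)/2)
noncomputable def g32 : ℕ → ℝ := fun n => 1 / (n:ℝ)^((3:ℝ)/2)
noncomputable def g3 : ℕ → ℝ := fun n => 1 / (n:ℝ)^((3:ℝ))

lemma g32_nonneg (n : ℕ) : 0 ≤ g32 n := by unfold g32; positivity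
lemma fsf_nonneg (n : ℕ) : 0 ≤ fsf n := by unfold fsf; split_ifs <;> positivity
lemma fsf_le_g32 (n : ℕ) : fsf n ≤ g32 n := by
  unfold fsf g32; split_ifs
  · exact le_refl _
  · rw [zero_div]; positivity

lemma summable_g32 : Summable g32 := Real.summable_one_div_nat_rpow.mpr (by norm_num)
lemma summable_g3 : Summable g3 := Real.summable_one_div_nat_rpow.mpr (by norm_num)
lemma summable_fsf : Summable fsf :=
  Summable.of_nonneg_of_le fsf_nonneg fsf_le_g32 summable_g32

-- uniqueness of squarefree decomposition
lemma decomp_unique {a₁ b₁ a₂ b₂ : ℕ} (ha₁ : Squarefree a₁) (ha₂ : Squarefree a₂)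
    (hb₁ : 0 < b₁) (hb₂ : 0 < b₂) (h : a₁ * b₁ ^ 2 = a₂ * b₂ ^ 2) : a₁ = a₂ ∧ b₁ = b₂ := by
  have ha₁0 : a₁ ≠ 0 := ha₁.ne_zero
  have ha₂0 : a₂ ≠ 0 := ha₂.ne_zero
  have hb₁0 : b₁ ^ 2 ≠ 0 := pow_ne_zero _ hb₁.ne'
  have hb₂0 : b₂ ^ 2 ≠ 0 := pow_ne_zero _ hb₂.ne'
  have hfact : a₁.factorization + 2 • b₁.factorization = a₂.factorization + 2 • b₂.factorization := by
    have := congrArg Nat.factorization h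
    rwa [Nat.factorization_mul ha₁0 hb₁0, Nat.factorization_mul ha₂0 hb₂0,
      Nat.factorization_pow, Nat.factorization_pow] at this
  have ha : a₁ = a₂ := by
    apply Nat.factorization_inj (by simpa using ha₁0) (by simpa using ha₂0)
    ext p
    have h1 := (Nat.squarefree_iff_factorization_le_one ha₁0).mp ha₁ p
    have h2 := (Nat.squarefree_iff_factorization_le_one ha₂0).mp ha₂ p
    have h3 := congrArg (fun f => f p) hfact
    simp only [Finsupp.add_apply, Finsupp.smul_apply, smul_eq_mul] at h3
    omega
  subst ha
  have hb : b₁ ^ 2 = b₂ ^ 2 := Nat.eq_of_mul_eq_mul_left (Nat.pos_of_ne_zero ha₁0) h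
  exact ⟨rfl, Nat.pow_left_injective (by norm_num) hb⟩


noncomputable def F : ↥{a : ℕ | Squarefree a} → ℝ := fun a => g32 a.1
noncomputable def G : ↥{b : ℕ | 0 < b} → ℝ := fun b => g3 b.1

lemma e_inj : Function.Injective
    (fun p : ↥{a : ℕ | Squarefree a} × ↥{b : ℕ | 0 < b} => p.1.1 * p.2.1 ^ 2) := by
  rintro ⟨⟨a₁, ha₁⟩, ⟨b₁, hb₁⟩⟩ ⟨⟨a₂, ha₂⟩, ⟨b₂, hb₂⟩⟩ h
  simp only at h
  obtain ⟨h1, h2⟩ := decomp_unique ha₁ ha₂ hb₁ hb₂ h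
  simp [h1, h2]

lemma summable_F : Summable F := summable_g32.comp_injective Subtype.val_injective
lemma summable_G : Summable G := summable_g3.comp_injective Subtype.val_injective

lemma tsum_F : ∑' a, F a = ∑' n, fsf n := by
  rw [show (∑' a, F a) = ∑' (a : ↥{a : ℕ | Squarefree a}), g32 a.1 from rfl, _root_.tsum_subtype]
  apply tsum_congr
  intro n
  rw [Set.indicator_apply]
  unfold fsf g32
  by_cases h : Squarefree n
  · simp [h, Set.mem_setOf_eq]
  · simp [h, Set.mem_setOf_eq]

lemma tsum_G : ∑' b, G b = ∑' n, g3 n := by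
  apply Function.Injective.tsum_eq Subtype.val_injective
  rw [Subtype.range_coe]
  intro n hn
  simp only [Function.mem_support, g3] at hn
  have : n ≠ 0 := by
    intro h0
    apply hn
    simp [h0, Real.zero_rpow (by norm_num : (3:ℝ) ≠ 0)]
  exact Nat.pos_of_ne_zero this

lemma g32_split (a b : ℕ) : g32 (a * b ^ 2) = g32 a * g3 b := by
  unfold g32 g3
  push_cast
  rw [Real.mul_rpow (by positivity) (by positivity)]
  rw [show ((b:ℝ)^2) = (b:ℝ)^((2:ℕ):ℝ) from (Real.rpow_natCast _ 2).symm,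
    ← Real.rpow_mul (by positivity)]
  norm_num
  ring

lemma key_prod : (∑' n, g32 n) = (∑' n, fsf n) * (∑' n, g3 n) := by
  have hsupp : Function.support g32 ⊆ Set.range
      (fun p : ↥{a : ℕ | Squarefree a} × ↥{b : ℕ | 0 < b} => p.1.1 * p.2.1 ^ 2) := by
    intro n hn
    have hn0 : 0 < n := by
      rcases Nat.eq_zero_or_pos n with h | h
      · exfalso; apply hn; simp [g32, h, Real.zero_rpow (by norm_num : (3:ℝ)/2 ≠ 0)]
      · exact h
    obtain ⟨a, b, ha0, hb0, hab, hsf⟩ := Nat.sq_mul_squarefree_of_pos hn0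
    exact ⟨(⟨a, hsf⟩, ⟨b, hb0⟩), by simp [← hab]; ring⟩
  have h1 : ∑' (p : ↥{a : ℕ | Squarefree a} × ↥{b : ℕ | 0 < b}), g32 (p.1.1 * p.2.1 ^ 2)
      = ∑' n, g32 n := Function.Injective.tsum_eq e_inj hsupp
  rw [← h1]
  have h2 : ∀ p : ↥{a : ℕ | Squarefree a} × ↥{b : ℕ | 0 < b},
      g32 (p.1.1 * p.2.1 ^ 2) = F p.1 * G p.2 := fun p => g32_split _ _
  rw [tsum_congr h2]
  have hsum : Summable (fun p : ↥{a : ℕ | Squarefree a} × ↥{b : ℕ | 0 < b} => F p.1 * G p.2) := by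
    apply Summable.mul_of_nonneg summable_F summable_G
    · intro a; unfold F g32; positivity
    · intro b; unfold G g3; positivity
  rw [Summable.tsum_prod hsum]
  calc ∑' a, ∑' b, F a * G b = ∑' a, F a * ∑' b, G b := by
        apply tsum_congr; intro a; exact tsum_mul_left
    _ = (∑' a, F a) * ∑' b, G b := tsum_mul_right
    _ = (∑' n, fsf n) * (∑' n, g3 n) := by rw [tsum_F, tsum_G]

lemma zeta32_eq : riemannZeta (3/2) = ((∑' n, g32 n : ℝ) : ℂ) := by
  rw [zeta_eq_tsum_one_div_nat_cpow (by rw [show (3/2 : ℂ) = ((3/2 : ℝ) : ℂ) by norm_num, Complex.ofReal_re]; norm_num)]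
  rw [show ((∑' n, g32 n : ℝ) : ℂ) = Complex.ofRealCLM (∑' n, g32 n) from rfl,
    ContinuousLinearMap.map_tsum _ summable_g32]
  apply tsum_congr
  intro n
  simp only [Complex.ofRealCLM_apply, g32]
  rw [Complex.ofReal_div, Complex.ofReal_one, Complex.ofReal_cpow (by positivity)]
  norm_num

lemma zeta3_eq : riemannZeta 3 = ((∑' n, g3 n : ℝ) : ℂ) := by
  rw [zeta_eq_tsum_one_div_nat_cpow (by norm_num)]
  rw [show ((∑' n, g3 n : ℝ) : ℂ) = Complex.ofRealCLM (∑' n, g3 n) from rfl,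
    ContinuousLinearMap.map_tsum _ summable_g3]
  apply tsum_congr
  intro n
  simp only [Complex.ofRealCLM_apply, g3]
  rw [Complex.ofReal_div, Complex.ofReal_one, Complex.ofReal_cpow (by positivity)]
  norm_num

lemma g3_sum_pos : 0 < ∑' n, g3 n := by
  apply Summable.tsum_pos summable_g3 (fun n => by unfold g3; positivity) 1
  unfold g3; norm_num

lemma zeta_id : riemannZeta (3/2) / riemannZeta 3 = ((∑' n, fsf n : ℝ) : ℂ) := by
  rw [zeta32_eq, zeta3_eq, key_prod]
  rw [Complex.ofReal_mul]
  rw [mul_div_assoc, div_self (by exact_mod_cast g3_sum_pos.ne'), mul_one]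


-- counting lemma
lemma count_eq (Y : ℝ) (hY : 0 ≤ Y) :
    ({a : ℕ | 0 < a ∧ (a : ℝ)^2 ≤ Y}.ncard : ℝ) = (⌊Real.sqrt Y⌋₊ : ℝ) := by
  have hset : {a : ℕ | 0 < a ∧ (a : ℝ)^2 ≤ Y} = ↑(Finset.Icc 1 ⌊Real.sqrt Y⌋₊) := by
    ext a
    simp only [Set.mem_setOf_eq, Finset.coe_Icc, Set.mem_Icc]
    constructor
    · rintro ⟨h1, h2⟩
      refine ⟨h1, Nat.le_floor ?_⟩
      exact (Real.le_sqrt (by positivity) hY).mpr h2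
    · rintro ⟨h1, h2⟩
      refine ⟨h1, ?_⟩
      have : (a : ℝ) ≤ Real.sqrt Y := (Nat.le_floor_iff (Real.sqrt_nonneg Y)).mp h2
      nlinarith [Real.sq_sqrt hY, Real.sqrt_nonneg Y]
  rw [hset, Set.ncard_coe_finset, Nat.card_Icc]
  simp

-- floor approximation
lemma floor_approx (y : ℝ) (hy : 0 ≤ y) : |(⌊y⌋₊ : ℝ) - y| ≤ 1 := by
  rw [abs_le]
  have h1 := Nat.floor_le hy
  have h2 := Nat.lt_floor_add_one y
  constructor <;> linarith

-- the key per-term telescoping inequality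
lemma step_ineq (x : ℝ) (hx : 2 ≤ x) :
    1 / x ^ ((3:ℝ)/2) ≤ 2 / Real.sqrt (x - 1) - 2 / Real.sqrt x := by
  set s := Real.sqrt x with hs_def
  set t := Real.sqrt (x - 1) with ht_def
  have hx0 : (0:ℝ) < x := by linarith
  have hs2 : s ^ 2 = x := Real.sq_sqrt hx0.le
  have ht2 : t ^ 2 = x - 1 := Real.sq_sqrt (by linarith)
  have hs0 : 0 < s := Real.sqrt_pos.mpr hx0
  have ht0 : 0 < t := Real.sqrt_pos.mpr (by linarith)
  have hts : t ≤ s := Real.sqrt_le_sqrt (by linarith)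
  have hsplit : x ^ ((3:ℝ)/2) = x * s := by
    rw [hs_def, Real.sqrt_eq_rpow, show ((3:ℝ)/2) = 1 + 1/2 by norm_num,
      Real.rpow_add hx0, Real.rpow_one]
  rw [hsplit]
  have key : (s - t) * (s + t) = 1 := by nlinarith
  have hrhs : 2 / t - 2 / s = 2 * (s - t) / (t * s) := by
    field_simp
  rw [hrhs]
  rw [div_le_div_iff₀ (by positivity) (by positivity)]
  nlinarith [mul_pos ht0 hs0, mul_pos hs0 hs0, sq_nonneg (s - t),
    mul_le_mul_of_nonneg_right hts (mul_pos hs0 hs0).le,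
    mul_le_mul_of_nonneg_right hts hs0.le]

-- telescoping sum bound
lemma sum_Icc_g32_le (N M : ℕ) (hN : 1 ≤ N) :
    ∑ b ∈ Finset.Icc (N+1) M, g32 b ≤ 2 / Real.sqrt N := by
  have hIcc : Finset.Icc (N+1) M = Finset.Ico (N+1) (M+1) := by
    rw [Finset.Ico_add_one_right_eq_Icc]
  rw [hIcc, Finset.sum_Ico_eq_sum_range]
  set k := M + 1 - (N + 1) with hk
  have hstep : ∀ i ∈ Finset.range k,
      g32 (N + 1 + i) ≤ (fun j => 2 / Real.sqrt (N + j : ℕ)) i - (fun j => 2 / Real.sqrt (N + j : ℕ)) (i+1) := by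
    intro i _
    simp only
    have h2 : (2:ℝ) ≤ ((N + 1 + i : ℕ) : ℝ) := by
      push_cast; have : (1:ℝ) ≤ N := by exact_mod_cast hN
      linarith
    have := step_ineq ((N + 1 + i : ℕ) : ℝ) h2
    unfold g32
    have hcast1 : ((N + 1 + i : ℕ) : ℝ) - 1 = ((N + i : ℕ) : ℝ) := by push_cast; ring
    have hcast2 : ((N + 1 + i : ℕ) : ℝ) = ((N + (i+1) : ℕ) : ℝ) := by push_cast; ring
    rw [hcast1, hcast2] at this
    have e : N + 1 + i = N + (i + 1) := by omega
    rw [e]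
    exact this
  calc ∑ i ∈ Finset.range k, g32 (N + 1 + i)
      ≤ ∑ i ∈ Finset.range k, ((fun j => 2 / Real.sqrt (N + j : ℕ)) i - (fun j => 2 / Real.sqrt (N + j : ℕ)) (i+1)) :=
        Finset.sum_le_sum hstep
    _ = 2 / Real.sqrt (N + 0 : ℕ) - 2 / Real.sqrt (N + k : ℕ) := Finset.sum_range_sub' _ k
    _ ≤ 2 / Real.sqrt N := by
        have : 0 ≤ 2 / Real.sqrt (N + k : ℕ) := by positivity
        simp only [Nat.add_zero]
        linarith

-- tail bound
lemma tail_le (N : ℕ) (hN : 1 ≤ N) :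
    ∑' (b : ↑((↑(Finset.range (N+1)) : Set ℕ)ᶜ)), fsf ↑b ≤ 2 / Real.sqrt N := by
  apply Summable.tsum_le_of_sum_le (summable_fsf.subtype _)
  intro u
  have hval : ∑ x ∈ u, fsf ↑x = ∑ n ∈ u.image Subtype.val, fsf n := by
    rw [Finset.sum_image (fun x _ y _ h => Subtype.val_injective h)]
  simp only [Function.comp_apply]
  rw [hval]
  set v := u.image Subtype.val with hv
  rcases v.eq_empty_or_nonempty with h | h
  · rw [h]; simp; positivity
  · set M := v.max' h with hM
    have hsub : v ⊆ Finset.Icc (N+1) M := by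
      intro n hn
      rw [Finset.mem_Icc]
      constructor
      · have : n ∈ ((↑(Finset.range (N+1)) : Set ℕ)ᶜ) := by
          obtain ⟨x, hx, rfl⟩ := Finset.mem_image.mp hn
          exact x.2
        simp only [Set.mem_compl_iff, Finset.coe_range, Set.mem_Iio, not_lt] at this
        exact this
      · exact Finset.le_max' v n hn
    calc ∑ n ∈ v, fsf n ≤ ∑ n ∈ Finset.Icc (N+1) M, fsf n :=
          Finset.sum_le_sum_of_subset_of_nonneg hsub (fun i _ _ => fsf_nonneg i)
      _ ≤ ∑ n ∈ Finset.Icc (N+1) M, g32 n := Finset.sum_le_sum (fun i _ => fsf_le_g32 i)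
      _ ≤ 2 / Real.sqrt N := sum_Icc_g32_le N M hN


theorem sum_moebius_sq_count_squares :
    ∃ C : ℝ, ∀ X H B : ℝ, 4 ≤ H → H ≤ X → 1 ≤ B →
      ‖(((∑ b ∈ Finset.Icc 1 ⌊B⌋₊,
            ((ArithmeticFunction.moebius b : ℝ))^2
              * ({a : ℕ | 0 < a ∧ (a : ℝ)^2 ≤ X / (b : ℝ)^3}.ncard : ℝ) : ℝ) : ℂ)
          - ((Real.sqrt X : ℝ) : ℂ) * (riemannZeta (3/2) / riemannZeta 3))‖
        ≤ C * (Real.sqrt X * B^(-(1:ℝ)/2) + B) := by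
  refine ⟨3, ?_⟩
  intro X H B hH hHX hB
  set N := ⌊B⌋₊ with hN_def
  have hX4 : (4:ℝ) ≤ X := le_trans hH hHX
  have hX0 : (0:ℝ) < X := by linarith
  have hN1 : 1 ≤ N := Nat.le_floor (by exact_mod_cast hB)
  have hN1' : (1:ℝ) ≤ (N:ℝ) := by exact_mod_cast hN1
  have hNB : (N:ℝ) ≤ B := Nat.floor_le (by linarith)
  have hBN : B < (N:ℝ) + 1 := Nat.lt_floor_add_one B
  have hB2N : B / 2 ≤ (N:ℝ) := by rcases le_total B 2 with h | h <;> linarith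
  set S := ∑' n, fsf n with hS_def
  -- μ² as indicator
  have hmu : ∀ b : ℕ, ((ArithmeticFunction.moebius b : ℤ) : ℝ)^2
      = if Squarefree b then (1:ℝ) else 0 := by
    intro b
    have h : (ArithmeticFunction.moebius b)^2 = if Squarefree b then (1:ℤ) else 0 :=
      ArithmeticFunction.moebius_sq
    calc ((ArithmeticFunction.moebius b : ℤ) : ℝ)^2
        = (((ArithmeticFunction.moebius b)^2 : ℤ) : ℝ) := by push_cast; ring
      _ = _ := by rw [h]; simp [apply_ite (Int.cast : ℤ → ℝ)]
  -- per-b facts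
  have hbpos : ∀ b ∈ Finset.Icc 1 N, (0:ℝ) < (b:ℝ)^3 := by
    intro b hb
    rw [Finset.mem_Icc] at hb
    have : (1:ℝ) ≤ (b:ℝ) := by exact_mod_cast hb.1
    positivity
  have hsqrt : ∀ b ∈ Finset.Icc 1 N,
      Real.sqrt (X / (b:ℝ)^3) = Real.sqrt X / (b:ℝ)^((3:ℝ)/2) := by
    intro b hb
    rw [Finset.mem_Icc] at hb
    have hb1 : (1:ℝ) ≤ (b:ℝ) := by exact_mod_cast hb.1
    rw [Real.sqrt_div hX0.le]
    congr 1
    rw [Real.sqrt_eq_rpow, show ((b:ℝ)^3) = (b:ℝ)^((3:ℕ):ℝ) from (Real.rpow_natCast _ 3).symm,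
      ← Real.rpow_mul (by linarith)]
    norm_num
  -- rewrite the sum
  have hsum_eq : (∑ b ∈ Finset.Icc 1 N, ((ArithmeticFunction.moebius b : ℝ))^2
        * ({a : ℕ | 0 < a ∧ (a : ℝ)^2 ≤ X / (b : ℝ)^3}.ncard : ℝ))
      = ∑ b ∈ Finset.Icc 1 N,
          (if Squarefree b then (1:ℝ) else 0) * (⌊Real.sqrt (X / (b:ℝ)^3)⌋₊ : ℝ) := by
    apply Finset.sum_congr rfl
    intro b hb
    rw [hmu b, count_eq _ (le_of_lt (div_pos hX0 (hbpos b hb)))]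
  -- decomposition
  set y : ℕ → ℝ := fun b => Real.sqrt (X / (b:ℝ)^3) with hy_def
  have hdecomp : ∀ b ∈ Finset.Icc 1 N,
      (if Squarefree b then (1:ℝ) else 0) * (⌊y b⌋₊ : ℝ)
      = (if Squarefree b then (1:ℝ) else 0) * ((⌊y b⌋₊ : ℝ) - y b) + Real.sqrt X * fsf b := by
    intro b hb
    have h1 : y b = Real.sqrt X / (b:ℝ)^((3:ℝ)/2) := hsqrt b hb
    unfold fsf
    rw [h1]
    ring
  rw [hsum_eq, Finset.sum_congr rfl hdecomp, Finset.sum_add_distrib, ← Finset.mul_sum]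
  -- partial sum of fsf over Icc 1 N equals over range (N+1)
  have hP : ∑ b ∈ Finset.Icc 1 N, fsf b = ∑ b ∈ Finset.range (N+1), fsf b := by
    have h0 : Finset.range (N+1) = insert 0 (Finset.Icc 1 N) := by
      ext x
      simp only [Finset.mem_range, Finset.mem_insert, Finset.mem_Icc]
      omega
    rw [h0, Finset.sum_insert (by simp)]
    have : fsf 0 = 0 := by
      unfold fsf
      simp [Real.zero_rpow (by norm_num : (3:ℝ)/2 ≠ 0)]
    rw [this, zero_add]
  -- tail
  set T := ∑' (b : ↑((↑(Finset.range (N+1)) : Set ℕ)ᶜ)), fsf ↑b with hT_def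
  have hcompl : ∑ b ∈ Finset.range (N+1), fsf b + T = S :=
    Summable.sum_add_tsum_compl summable_fsf
  have hT0 : 0 ≤ T := tsum_nonneg (fun b => fsf_nonneg _)
  have hTle : T ≤ 2 / Real.sqrt N := tail_le N hN1
  -- the first error sum
  set E1 := ∑ b ∈ Finset.Icc 1 N,
      (if Squarefree b then (1:ℝ) else 0) * ((⌊y b⌋₊ : ℝ) - y b) with hE1_def
  have hE1 : |E1| ≤ (N:ℝ) := by
    calc |E1| ≤ ∑ b ∈ Finset.Icc 1 N,
        |(if Squarefree b then (1:ℝ) else 0) * ((⌊y b⌋₊ : ℝ) - y b)| :=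
          Finset.abs_sum_le_sum_abs _ _
      _ ≤ ∑ b ∈ Finset.Icc 1 N, 1 := by
          apply Finset.sum_le_sum
          intro b hb
          rw [abs_mul]
          have h1 : |if Squarefree b then (1:ℝ) else 0| ≤ 1 := by
            split_ifs <;> simp
          have h2 : |(⌊y b⌋₊ : ℝ) - y b| ≤ 1 :=
            floor_approx _ (Real.sqrt_nonneg _)
          calc |if Squarefree b then (1:ℝ) else 0| * |(⌊y b⌋₊ : ℝ) - y b|
              ≤ 1 * 1 := by
                apply mul_le_mul h1 h2 (abs_nonneg _) (by norm_num)
            _ = 1 := by norm_num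
      _ = ((Finset.Icc 1 N).card : ℝ) := by rw [Finset.sum_const]; simp
      _ = (N:ℝ) := by rw [Nat.card_Icc]; simp
  -- complex to real
  rw [zeta_id, ← hS_def, ← Complex.ofReal_mul, ← Complex.ofReal_sub, Complex.norm_real, Real.norm_eq_abs]
  -- main real estimate
  have hkey : E1 + Real.sqrt X * (∑ b ∈ Finset.Icc 1 N, fsf b) - Real.sqrt X * S
      = E1 - Real.sqrt X * T := by
    rw [hP, ← hcompl]; ring
  rw [hkey]
  have hsX : 0 ≤ Real.sqrt X := Real.sqrt_nonneg X
  have hBpow : B^(-(1:ℝ)/2) = (Real.sqrt B)⁻¹ := by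
    rw [show (-(1:ℝ)/2) = -(1/2) by ring, Real.rpow_neg (by linarith), Real.sqrt_eq_rpow]
  have hsqrtB : 0 < Real.sqrt B := Real.sqrt_pos.mpr (by linarith)
  have hsqrtN : 0 < Real.sqrt (N:ℝ) := Real.sqrt_pos.mpr (by linarith)
  have h2N : 2 / Real.sqrt (N:ℝ) ≤ 2 * Real.sqrt 2 * B^(-(1:ℝ)/2) := by
    rw [hBpow, div_le_iff₀ hsqrtN]
    have hBle : Real.sqrt B ≤ Real.sqrt 2 * Real.sqrt (N:ℝ) := by
      rw [← Real.sqrt_mul (by norm_num : (0:ℝ) ≤ 2)]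
      exact Real.sqrt_le_sqrt (by linarith)
    calc (2:ℝ) = 2 * Real.sqrt B * (Real.sqrt B)⁻¹ := by field_simp
      _ ≤ 2 * (Real.sqrt 2 * Real.sqrt (N:ℝ)) * (Real.sqrt B)⁻¹ := by
          apply mul_le_mul_of_nonneg_right _ (by positivity)
          linarith
      _ = 2 * Real.sqrt 2 * (Real.sqrt B)⁻¹ * Real.sqrt (N:ℝ) := by ring
  have hsqrt2 : Real.sqrt 2 ≤ 3/2 := by
    nlinarith [Real.sq_sqrt (by norm_num : (0:ℝ) ≤ 2), Real.sqrt_nonneg 2]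
  have hBpow_nonneg : 0 ≤ B^(-(1:ℝ)/2) := by rw [hBpow]; positivity
  calc |E1 - Real.sqrt X * T| ≤ |E1| + Real.sqrt X * T := by
        have := abs_sub (E1) (Real.sqrt X * T)
        have habs : |Real.sqrt X * T| = Real.sqrt X * T := abs_of_nonneg (by positivity)
        calc |E1 - Real.sqrt X * T| ≤ |E1| + |Real.sqrt X * T| := abs_sub _ _
          _ = |E1| + Real.sqrt X * T := by rw [habs]
    _ ≤ (N:ℝ) + Real.sqrt X * (2 / Real.sqrt (N:ℝ)) := by
        have := mul_le_mul_of_nonneg_left hTle hsX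
        linarith
    _ ≤ B + Real.sqrt X * (2 * Real.sqrt 2 * B^(-(1:ℝ)/2)) := by
        have := mul_le_mul_of_nonneg_left h2N hsX
        linarith
    _ ≤ 3 * (Real.sqrt X * B^(-(1:ℝ)/2) + B) := by
        have h1 : Real.sqrt X * (2 * Real.sqrt 2 * B^(-(1:ℝ)/2))
            ≤ 3 * (Real.sqrt X * B^(-(1:ℝ)/2)) := by
          have h2 : 2 * Real.sqrt 2 ≤ 3 := by linarith
          nlinarith [mul_nonneg hsX hBpow_nonneg]
        linarith
end

section
/- Let N be a positive integer and B ≥ 1 a real number. Define R(N) = ∑_{p + f = N, f squarefull} log p (sum over primes p and squarefull numbers f), and R̃_B(N) = ∑_{p + a²b³ = N, b ≤ B} (log p)·μ(b)². Then R(N) = R̃_B(N) + O(N^{1/2}·(log N)·B^{-1/2}). -/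
open Finset

/-- A positive integer `n` is squarefull if `p² ∣ n` for every prime `p ∣ n`. -/
def SquarefullNat (n : ℕ) : Prop :=
  0 < n ∧ ∀ p : ℕ, p.Prime → p ∣ n → p^2 ∣ n

open Classical in
/-- `R N = ∑_{p + f = N, f squarefull} log p`. -/
noncomputable def Rrep (N : ℕ) : ℝ :=
  ∑ p ∈ Finset.range N, if p.Prime ∧ SquarefullNat (N - p) then Real.log p else 0

open Classical in
/-- `R̃_B(N) = ∑_{p + a²b³ = N, b ≤ B} (log p)·μ(b)²`. -/
noncomputable def RrepB (N : ℕ) (B : ℝ) : ℝ :=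
  ∑ p ∈ Finset.range N, ∑ a ∈ Finset.Icc 1 N, ∑ b ∈ Finset.Icc 1 N,
    if p.Prime ∧ (b : ℝ) ≤ B ∧ p + a^2 * b^3 = N then
      Real.log p * ((ArithmeticFunction.moebius b : ℝ))^2 else 0

lemma squarefull_of_rep {a b : ℕ} (ha : 0 < a) (hb : 0 < b) :
    SquarefullNat (a^2 * b^3) := by
  refine ⟨by positivity, fun p hp hpd => ?_⟩
  rcases (Nat.Prime.dvd_mul hp).1 hpd with h | h
  · exact dvd_mul_of_dvd_left (pow_dvd_pow_of_dvd (hp.dvd_of_dvd_pow h) 2) _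
  · exact dvd_mul_of_dvd_right ((pow_dvd_pow_of_dvd (hp.dvd_of_dvd_pow h) 2).trans
      (pow_dvd_pow _ (by norm_num))) _

lemma exists_rep {f : ℕ} (hf : SquarefullNat f) :
    ∃ a b : ℕ, 0 < a ∧ Squarefree b ∧ a^2 * b^3 = f := by
  obtain ⟨hf0, hsq⟩ := hf
  obtain ⟨s, t, hs, ht, htsn, hssq⟩ := Nat.sq_mul_squarefree_of_pos hf0
  have hsd : s ∣ t := by
    conv_lhs => rw [← Nat.prod_primeFactors_of_squarefree hssq]
    refine Finset.prod_primes_dvd _ (fun p hp => (Nat.prime_of_mem_primeFactors hp).prime)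
      (fun p hp => ?_)
    have hpp := Nat.prime_of_mem_primeFactors hp
    have hps : p ∣ s := Nat.dvd_of_mem_primeFactors hp
    have hpf : p ∣ f := hps.trans ⟨t ^ 2, by rw [← htsn]; ring⟩
    have hp2 : p ^ 2 ∣ t ^ 2 * s := by rw [htsn]; exact hsq p hpp hpf
    by_contra hpt
    have hcop : Nat.Coprime (p ^ 2) (t ^ 2) :=
      Nat.Coprime.pow 2 2 (hpp.coprime_iff_not_dvd.mpr hpt)
    have hdvd : p ^ 2 ∣ s := hcop.dvd_of_dvd_mul_left hp2
    have : IsUnit p := hssq p (by simpa [pow_two] using hdvd)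
    exact hpp.one_lt.ne' (Nat.isUnit_iff.1 this)
  obtain ⟨c, hc⟩ := hsd
  refine ⟨c, s, ?_, hssq, ?_⟩
  · rcases Nat.eq_zero_or_pos c with h | h
    · exfalso; rw [h, mul_zero] at hc; exact ht.ne' hc
    · exact h
  · rw [← htsn, hc]; ring

lemma rep_unique {a b a' b' : ℕ} (ha : 0 < a) (ha' : 0 < a')
    (hb : Squarefree b) (hb' : Squarefree b')
    (h : a^2 * b^3 = a'^2 * b'^3) : a = a' ∧ b = b' := by
  have hb0 : b ≠ 0 := hb.ne_zero
  have hb'0 : b' ≠ 0 := hb'.ne_zero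
  have ha0 : a ≠ 0 := ha.ne'
  have ha'0 : a' ≠ 0 := ha'.ne'
  have hbb' : b = b' := by
    refine Nat.factorization_inj (Set.mem_setOf.2 hb0) (Set.mem_setOf.2 hb'0) ?_
    ext q
    have h1 : (a^2 * b^3).factorization q = 2 * a.factorization q + 3 * b.factorization q := by
      rw [Nat.factorization_mul (by positivity) (by positivity), Nat.factorization_pow,
        Nat.factorization_pow]
      simp
    have h2 : (a'^2 * b'^3).factorization q = 2 * a'.factorization q + 3 * b'.factorization q := by
      rw [Nat.factorization_mul (by positivity) (by positivity), Nat.factorization_pow,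
        Nat.factorization_pow]
      simp
    have hble : b.factorization q ≤ 1 :=
      (Nat.squarefree_iff_factorization_le_one hb0).1 hb q
    have hb'le : b'.factorization q ≤ 1 :=
      (Nat.squarefree_iff_factorization_le_one hb'0).1 hb' q
    have heq : 2 * a.factorization q + 3 * b.factorization q
        = 2 * a'.factorization q + 3 * b'.factorization q := by
      rw [← h1, ← h2, h]
    omega
  subst hbb'
  have : a ^ 2 = a' ^ 2 := Nat.eq_of_mul_eq_mul_right (by positivity) h
  exact ⟨Nat.pow_left_injective (by norm_num) this, rfl⟩

open Classical in
lemma inner_sum_eq (N p : ℕ) (hp : p < N) :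
    (∑ a ∈ Icc 1 N, ∑ b ∈ Icc 1 N,
      if p.Prime ∧ Squarefree b ∧ p + a^2 * b^3 = N then Real.log p else 0)
      = if p.Prime ∧ SquarefullNat (N - p) then Real.log p else 0 := by
  by_cases hpr : p.Prime
  · by_cases hsq : SquarefullNat (N - p)
    · obtain ⟨a₀, b₀, ha₀, hb₀, hab₀⟩ := exists_rep hsq
      have hfpos : 0 < N - p := Nat.sub_pos_of_lt hp
      have hb₀pos : 0 < b₀ := hb₀.ne_zero.bot_lt
      have hsum : p + a₀^2 * b₀^3 = N := by rw [hab₀]; omega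
      have ha₀N : a₀ ∈ Icc 1 N := by
        simp only [mem_Icc]
        refine ⟨ha₀, ?_⟩
        calc a₀ ≤ a₀^2 * b₀^3 := Nat.le_of_dvd (by positivity) ⟨a₀ * b₀^3, by ring⟩
          _ ≤ N := by omega
      have hb₀N : b₀ ∈ Icc 1 N := by
        simp only [mem_Icc]
        refine ⟨hb₀pos, ?_⟩
        calc b₀ ≤ a₀^2 * b₀^3 := Nat.le_of_dvd (by positivity) ⟨a₀^2 * b₀^2, by ring⟩
          _ ≤ N := by omega
      rw [← Finset.sum_product']
      rw [Finset.sum_eq_single_of_mem (a₀, b₀) (Finset.mem_product.2 ⟨ha₀N, hb₀N⟩)]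
      · simp [hpr, hb₀, hsum, hsq]
      · rintro ⟨a, b⟩ hab hne
        simp only [Finset.mem_product, mem_Icc] at hab
        split_ifs with hcond
        · exfalso
          obtain ⟨-, hbsf, heq⟩ := hcond
          dsimp only at hbsf heq
          have : a^2 * b^3 = a₀^2 * b₀^3 := by omega
          obtain ⟨h1, h2⟩ := rep_unique (by omega : 0 < a) ha₀ hbsf hb₀ this
          exact hne (by simp [h1, h2])
        · rfl
    · refine (Finset.sum_eq_zero fun a ha => Finset.sum_eq_zero fun b hb => ?_).trans
        (by simp [hsq])
      simp only [mem_Icc] at ha hb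
      split_ifs with hcond
      · exfalso
        obtain ⟨-, hbsf, heq⟩ := hcond
        have : N - p = a^2 * b^3 := by omega
        exact hsq (this ▸ squarefull_of_rep (by omega) (by omega))
      · rfl
  · simp [hpr]

lemma key_ineq {k : ℕ} (hk : 1 ≤ k) :
    ((↑(k+1) : ℝ) * Real.sqrt (k+1))⁻¹ ≤ 2 / Real.sqrt k - 2 / Real.sqrt (k+1) := by
  set s := Real.sqrt k with hs
  set t := Real.sqrt (k+1) with ht
  have hs1 : (1:ℝ) ≤ s := by
    rw [hs, show (1:ℝ) = Real.sqrt 1 by simp]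
    exact Real.sqrt_le_sqrt (by exact_mod_cast hk)
  have hs0 : (0:ℝ) < s := lt_of_lt_of_le one_pos hs1
  have hssq : s^2 = k := Real.sq_sqrt (by positivity)
  have htsq : t^2 = (k:ℝ)+1 := by
    rw [ht]; push_cast; exact Real.sq_sqrt (by positivity)
  have hst : s ≤ t := Real.sqrt_le_sqrt (by push_cast; linarith)
  have ht0 : (0:ℝ) < t := lt_of_lt_of_le hs0 hst
  have hcast : ((↑(k+1):ℝ)) = t^2 := by rw [htsq]; push_cast; ring
  have h2 : (t - s) * (t + s) = 1 := by nlinarith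
  rw [hcast, inv_eq_one_div, div_sub_div _ _ hs0.ne' ht0.ne',
    div_le_div_iff₀ (by positivity) (by positivity)]
  have hkey : s * t * (t + s) ≤ 2 * t^3 := by nlinarith
  nlinarith [hkey, mul_pos hs0 ht0, (by linarith : (0:ℝ) < t + s)]

lemma tail_sum {m : ℕ} (hm : 2 ≤ m) (n : ℕ) :
    ∑ b ∈ Icc m n, ((b:ℝ) * Real.sqrt b)⁻¹ ≤ 2 / Real.sqrt (m - 1 : ℕ) := by
  have key : ∀ n, m - 1 ≤ n →
      ∑ b ∈ Icc m n, ((b:ℝ) * Real.sqrt b)⁻¹ ≤ 2 / Real.sqrt (m-1:ℕ) - 2 / Real.sqrt n := by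
    intro n hn
    induction n, hn using Nat.le_induction with
    | base =>
      rw [Finset.Icc_eq_empty (by omega)]
      simp
    | succ n hn ih =>
      rw [Finset.sum_Icc_succ_top (by omega : m ≤ n + 1)]
      have h1 : ((↑(n+1) : ℝ) * Real.sqrt (n+1))⁻¹ ≤ 2 / Real.sqrt n - 2 / Real.sqrt (n+1) :=
        key_ineq (by omega)
      push_cast at h1 ih ⊢
      linarith
  rcases le_or_gt (m - 1) n with h | h
  · refine (key n h).trans ?_
    have : 0 ≤ 2 / Real.sqrt n := by positivity
    linarith
  · rw [Finset.Icc_eq_empty (by omega)]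
    simp only [Finset.sum_empty]
    positivity

open Classical in
lemma count_le {N : ℕ} {t : ℝ} (ht : 0 ≤ t) :
    (((Icc 1 N).filter (fun a : ℕ => (a:ℝ) ≤ t)).card : ℝ) ≤ t := by
  have hsub : (Icc 1 N).filter (fun a : ℕ => (a:ℝ) ≤ t) ⊆ Icc 1 ⌊t⌋₊ := by
    intro a ha
    simp only [mem_filter, mem_Icc] at ha ⊢
    exact ⟨ha.1.1, Nat.le_floor ha.2⟩
  calc ((((Icc 1 N)).filter (fun a : ℕ => (a:ℝ) ≤ t)).card : ℝ)
      ≤ ((Icc 1 ⌊t⌋₊).card : ℝ) := by exact_mod_cast Finset.card_le_card hsub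
    _ = (⌊t⌋₊ : ℝ) := by rw [Nat.card_Icc]; simp
    _ ≤ t := Nat.floor_le ht

theorem Rrep_eq_RrepB_add_error :
    ∃ C : ℝ, ∀ N : ℕ, 0 < N → ∀ B : ℝ, 1 ≤ B →
      |Rrep N - RrepB N B|
        ≤ C * Real.sqrt N * Real.log N * B^(-(1:ℝ)/2) := by
  classical
  refine ⟨2 * Real.sqrt 2, fun N hN B hB => ?_⟩
  have hB0 : (0:ℝ) < B := lt_of_lt_of_le one_pos hB
  have hL0 : 0 ≤ Real.log N := Real.log_nonneg (by exact_mod_cast hN)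
  -- the difference as a nonnegative triple sum
  have hdiff : Rrep N - RrepB N B
      = ∑ p ∈ range N, ∑ a ∈ Icc 1 N, ∑ b ∈ Icc 1 N,
          (if p.Prime ∧ Squarefree b ∧ ¬((b:ℝ) ≤ B) ∧ p + a^2 * b^3 = N
            then Real.log p else 0) := by
    rw [Rrep, RrepB, ← Finset.sum_sub_distrib]
    refine Finset.sum_congr rfl fun p hp => ?_
    rw [← inner_sum_eq N p (mem_range.1 hp), ← Finset.sum_sub_distrib]
    refine Finset.sum_congr rfl fun a _ => ?_
    rw [← Finset.sum_sub_distrib]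
    refine Finset.sum_congr rfl fun b _ => ?_
    by_cases hsf : Squarefree b
    · have hmu : ((ArithmeticFunction.moebius b : ℤ) : ℝ)^2 = 1 := by
        rw_mod_cast [ArithmeticFunction.moebius_sq_eq_one_of_squarefree hsf]
      rw [hmu]
      by_cases hc1 : p.Prime <;> by_cases hc2 : p + a^2 * b^3 = N <;>
        by_cases hc3 : (b:ℝ) ≤ B <;> simp [hc1, hc2, hc3, hsf]
    · have hmu : ArithmeticFunction.moebius b = 0 :=
        ArithmeticFunction.moebius_eq_zero_of_not_squarefree hsf
      simp [hsf, hmu]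
  have hnonneg : 0 ≤ Rrep N - RrepB N B := by
    rw [hdiff]
    refine Finset.sum_nonneg fun p _ => Finset.sum_nonneg fun a _ =>
      Finset.sum_nonneg fun b _ => ?_
    split_ifs with h
    · exact Real.log_nonneg (by exact_mod_cast h.1.one_lt.le)
    · exact le_refl 0
  rw [abs_of_nonneg hnonneg, hdiff]
  set L := Real.log N with hLdef
  set F : ℕ → ℕ → ℕ → ℝ := fun p a b =>
    (if p.Prime ∧ Squarefree b ∧ ¬((b:ℝ) ≤ B) ∧ p + a^2 * b^3 = N
      then Real.log p else 0) with hF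
  have hreorder : (∑ p ∈ range N, ∑ a ∈ Icc 1 N, ∑ b ∈ Icc 1 N, F p a b)
      = ∑ b ∈ Icc 1 N, ∑ a ∈ Icc 1 N, ∑ p ∈ range N, F p a b := by
    calc (∑ p ∈ range N, ∑ a ∈ Icc 1 N, ∑ b ∈ Icc 1 N, F p a b)
        = ∑ a ∈ Icc 1 N, ∑ p ∈ range N, ∑ b ∈ Icc 1 N, F p a b := Finset.sum_comm
      _ = ∑ a ∈ Icc 1 N, ∑ b ∈ Icc 1 N, ∑ p ∈ range N, F p a b :=
          Finset.sum_congr rfl fun a _ => Finset.sum_comm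
      _ = ∑ b ∈ Icc 1 N, ∑ a ∈ Icc 1 N, ∑ p ∈ range N, F p a b := Finset.sum_comm
  rw [hreorder]
  have hfixedb : ∀ b ∈ Icc 1 N, (∑ a ∈ Icc 1 N, ∑ p ∈ range N, F p a b)
      ≤ (if B < (b:ℝ) then L * (Real.sqrt N * ((b:ℝ) * Real.sqrt b)⁻¹) else 0) := by
    intro b hb
    simp only [mem_Icc] at hb
    by_cases hBb : B < (b:ℝ)
    · rw [if_pos hBb]
      set t : ℝ := Real.sqrt N * ((b:ℝ) * Real.sqrt b)⁻¹ with htdef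
      have hbR : (1:ℝ) ≤ (b:ℝ) := by exact_mod_cast hb.1
      have hbsq : (0:ℝ) < (b:ℝ) * Real.sqrt b := by positivity
      have ht0 : 0 ≤ t := by positivity
      have hinner : ∀ a ∈ Icc 1 N, (∑ p ∈ range N, F p a b)
          ≤ (if (a:ℝ) ≤ t then L else 0) := by
        intro a ha
        simp only [mem_Icc] at ha
        have hstep : ∀ p ∈ range N, F p a b
            ≤ (if p = N - a^2 * b^3 then (if (a:ℝ) ≤ t then L else 0) else 0) := by
          intro p hp
          simp only [hF]
          by_cases hc : p.Prime ∧ Squarefree b ∧ ¬((b:ℝ) ≤ B) ∧ p + a^2 * b^3 = N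
          · have heqN : p + a^2 * b^3 = N := hc.2.2.2
            have heq : p = N - a^2 * b^3 := by omega
            have habN : a^2 * b^3 ≤ N := by omega
            have hat : (a:ℝ) ≤ t := by
              have hsqb : Real.sqrt b ^ 2 = (b:ℝ) := Real.sq_sqrt (by positivity)
              have hcast : ((a:ℝ) * ((b:ℝ) * Real.sqrt b))^2 = (a:ℝ)^2 * (b:ℝ)^3 := by
                nlinarith [hsqb]
              have hle2 : ((a:ℝ) * ((b:ℝ) * Real.sqrt b))^2 ≤ (N:ℝ) := by
                rw [hcast]
                calc (a:ℝ)^2 * (b:ℝ)^3 = ((a^2 * b^3 : ℕ) : ℝ) := by push_cast; ring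
                  _ ≤ (N:ℝ) := by exact_mod_cast habN
              have hle3 : (a:ℝ) * ((b:ℝ) * Real.sqrt b) ≤ Real.sqrt N :=
                (Real.le_sqrt (by positivity) (by positivity)).2 hle2
              rw [htdef, ← div_eq_mul_inv, le_div_iff₀ hbsq]
              exact hle3
            have hplog : Real.log p ≤ L := by
              rw [hLdef]
              have hp2 : (0:ℝ) < (p:ℝ) := by exact_mod_cast hc.1.pos
              exact Real.log_le_log hp2 (by exact_mod_cast Nat.le_of_lt (mem_range.1 hp))
            rw [if_pos hc, if_pos heq, if_pos hat]
            exact hplog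
          · rw [if_neg hc]
            split_ifs <;> simp [hL0]
        calc (∑ p ∈ range N, F p a b)
            ≤ ∑ p ∈ range N,
                (if p = N - a^2 * b^3 then (if (a:ℝ) ≤ t then L else 0) else 0) :=
              Finset.sum_le_sum hstep
          _ = (if N - a^2 * b^3 ∈ range N then (if (a:ℝ) ≤ t then L else 0) else 0) :=
              Finset.sum_ite_eq' _ _ _
          _ ≤ (if (a:ℝ) ≤ t then L else 0) := by split_ifs <;> simp [hL0]
      calc (∑ a ∈ Icc 1 N, ∑ p ∈ range N, F p a b)
          ≤ ∑ a ∈ Icc 1 N, (if (a:ℝ) ≤ t then L else 0) := Finset.sum_le_sum hinner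
        _ = (((Icc 1 N).filter (fun a : ℕ => (a:ℝ) ≤ t)).card : ℝ) * L := by
            rw [← Finset.sum_filter, Finset.sum_const, nsmul_eq_mul]
        _ ≤ t * L := mul_le_mul_of_nonneg_right (count_le ht0) hL0
        _ = L * (Real.sqrt N * ((b:ℝ) * Real.sqrt b)⁻¹) := by rw [htdef]; ring
    · rw [if_neg hBb]
      refine le_of_eq (Finset.sum_eq_zero fun a _ => Finset.sum_eq_zero fun p _ => ?_)
      simp only [hF]
      simp [not_lt.1 hBb]
  calc (∑ b ∈ Icc 1 N, ∑ a ∈ Icc 1 N, ∑ p ∈ range N, F p a b)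
      ≤ ∑ b ∈ Icc 1 N,
          (if B < (b:ℝ) then L * (Real.sqrt N * ((b:ℝ) * Real.sqrt b)⁻¹) else 0) :=
        Finset.sum_le_sum hfixedb
    _ = L * Real.sqrt N * ∑ b ∈ Icc 1 N,
          (if B < (b:ℝ) then ((b:ℝ) * Real.sqrt b)⁻¹ else 0) := by
        rw [Finset.mul_sum]
        refine Finset.sum_congr rfl fun b _ => ?_
        split_ifs <;> ring
    _ ≤ L * Real.sqrt N * (2 / Real.sqrt (⌊B⌋₊ : ℕ)) := by
        refine mul_le_mul_of_nonneg_left ?_ (by positivity)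
        have hflB : 1 ≤ ⌊B⌋₊ := Nat.le_floor (by exact_mod_cast hB)
        have hsubset : (Icc 1 N).filter (fun b : ℕ => B < (b:ℝ)) ⊆ Icc (⌊B⌋₊ + 1) N := by
          intro b hbm
          simp only [mem_filter, mem_Icc] at hbm ⊢
          exact ⟨Nat.succ_le_of_lt ((Nat.floor_lt hB0.le).2 hbm.2), hbm.1.2⟩
        calc (∑ b ∈ Icc 1 N, (if B < (b:ℝ) then ((b:ℝ) * Real.sqrt b)⁻¹ else 0))
            = ∑ b ∈ (Icc 1 N).filter (fun b : ℕ => B < (b:ℝ)),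
                ((b:ℝ) * Real.sqrt b)⁻¹ := (Finset.sum_filter _ _).symm
          _ ≤ ∑ b ∈ Icc (⌊B⌋₊ + 1) N, ((b:ℝ) * Real.sqrt b)⁻¹ :=
              Finset.sum_le_sum_of_subset_of_nonneg hsubset (fun i _ _ => by positivity)
          _ ≤ 2 / Real.sqrt ((⌊B⌋₊ + 1 - 1 : ℕ) : ℝ) := tail_sum (by omega) N
          _ = 2 / Real.sqrt (⌊B⌋₊ : ℕ) := by norm_num
    _ ≤ L * Real.sqrt N * (2 * Real.sqrt 2 / Real.sqrt B) := by
        refine mul_le_mul_of_nonneg_left ?_ (by positivity)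
        have hflB : 1 ≤ ⌊B⌋₊ := Nat.le_floor (by exact_mod_cast hB)
        have hfl1 : (1:ℝ) ≤ (⌊B⌋₊ : ℝ) := by exact_mod_cast hflB
        have h2B : B ≤ 2 * (⌊B⌋₊ : ℝ) := by
          have := Nat.lt_floor_add_one B
          linarith
        have hsB : Real.sqrt B ≤ Real.sqrt 2 * Real.sqrt (⌊B⌋₊ : ℝ) := by
          rw [← Real.sqrt_mul (by norm_num)]
          exact Real.sqrt_le_sqrt h2B
        have hsfl0 : (0:ℝ) < Real.sqrt (⌊B⌋₊ : ℝ) := Real.sqrt_pos.2 (by linarith)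
        have hsB0 : (0:ℝ) < Real.sqrt B := Real.sqrt_pos.2 hB0
        rw [div_le_div_iff₀ hsfl0 hsB0]
        calc 2 * Real.sqrt B ≤ 2 * (Real.sqrt 2 * Real.sqrt (⌊B⌋₊ : ℝ)) := by linarith
          _ = 2 * Real.sqrt 2 * Real.sqrt (⌊B⌋₊ : ℝ) := by ring
    _ = 2 * Real.sqrt 2 * Real.sqrt N * L * B ^ (-(1:ℝ)/2) := by
        have hBpow : B ^ (-(1:ℝ)/2) = (Real.sqrt B)⁻¹ := by
          rw [Real.sqrt_eq_rpow, ← Real.rpow_neg hB0.le]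
          norm_num
        rw [hBpow]
        field_simp
end
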